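/- Let P₁,P₂,P₃,P₄ be four distinct points of P¹(F) with cross-ratio λ₀, F a field with char(F) ≠ 2,3. There exists h ∈ PGL₂(F) fixing P₁ and cyclically permuting P₂ → P₃ → P₄ → P₂ if and only if λ₀² - λ₀ + 1 = 0 (equivalently, the j-invariant of the four points is 0). -/

import Mathlib

noncomputable section

/-- `det2 u v = u₀v₁ - u₁v₀`; it is nonzero iff `u, v` are nonzero vectors of `F²`
representing distinct points of `P¹(F)`. -/
def det2 {F : Type*} [Field F] (u v : Fin 2 → F) : F := u 0 * v 1 - u 1 * v 0

/-- The cross-ratio `(P₁,P₂;P₃,P₄)` of four points of `P¹(F)` represented by nonzero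
vectors `v 0, v 1, v 2, v 3` of `F²`. -/
def crossRatio {F : Type*} [Field F] (v : Fin 4 → Fin 2 → F) : F :=
  (det2 (v 0) (v 2) * det2 (v 1) (v 3)) / (det2 (v 1) (v 2) * det2 (v 0) (v 3))

/-- Auxiliary: `λ² - λ + 1` written over a common denominator. -/
lemma cr_expand {F : Type*} [Field F] (v : Fin 4 → Fin 2 → F)
    (hB : det2 (v 1) (v 2) * det2 (v 0) (v 3) ≠ 0) :
    (crossRatio v) ^ 2 - crossRatio v + 1 =
      ((det2 (v 0) (v 2) * det2 (v 1) (v 3))^2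
      - (det2 (v 0) (v 2) * det2 (v 1) (v 3)) * (det2 (v 1) (v 2) * det2 (v 0) (v 3))
      + (det2 (v 1) (v 2) * det2 (v 0) (v 3))^2) / (det2 (v 1) (v 2) * det2 (v 0) (v 3))^2 := by
  rw [crossRatio]; field_simp [left_ne_zero_of_mul hB, right_ne_zero_of_mul hB]

/-- for four distinct points `P₁,…,P₄` of `P¹(F)` with cross-ratio `λ₀`,
there exists `h ∈ PGL₂(F)` fixing `P₁` with `h(P₂)=P₃, h(P₃)=P₄, h(P₄)=P₂`
iff `λ₀² - λ₀ + 1 = 0`. -/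
theorem stmt9 {F : Type*} [Field F] (h2 : (2 : F) ≠ 0) (h3 : (3 : F) ≠ 0)
    (v : Fin 4 → Fin 2 → F)
    (hv : ∀ i j, i ≠ j → det2 (v i) (v j) ≠ 0) :
    (∃ g : Matrix (Fin 2) (Fin 2) F, g.det ≠ 0 ∧ ∃ c : Fin 4 → F, (∀ i, c i ≠ 0) ∧
      g.mulVec (v 0) = c 0 • v 0 ∧ g.mulVec (v 1) = c 1 • v 2 ∧
      g.mulVec (v 2) = c 2 • v 3 ∧ g.mulVec (v 3) = c 3 • v 1) ↔
    (crossRatio v) ^ 2 - crossRatio v + 1 = 0 := by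
  have hB : det2 (v 1) (v 2) * det2 (v 0) (v 3) ≠ 0 :=
    mul_ne_zero (hv 1 2 (by decide)) (hv 0 3 (by decide))
  constructor
  · rintro ⟨g, hg, c, hc, e0, e1, e2, e3⟩
    have L : ∀ u w, det2 (g.mulVec u) (g.mulVec w) = g.det * det2 u w := by
      intro u w
      simp [det2, Matrix.mulVec, dotProduct, Fin.sum_univ_two, Matrix.det_fin_two]
      ring
    have sm : ∀ (a b : F) (u w : Fin 2 → F), det2 (a • u) (b • w) = a * b * det2 u w := by
      intro a b u w; simp [det2, Pi.smul_apply, smul_eq_mul]; ring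
    have E1 : c 0 * c 2 * det2 (v 0) (v 3) = g.det * det2 (v 0) (v 2) := by
      have h := L (v 0) (v 2); rw [e0, e2, sm] at h; exact h
    have E2 : c 1 * c 3 * det2 (v 2) (v 1) = g.det * det2 (v 1) (v 3) := by
      have h := L (v 1) (v 3); rw [e1, e3, sm] at h; exact h
    have E3 : c 1 * c 2 * det2 (v 2) (v 3) = g.det * det2 (v 1) (v 2) := by
      have h := L (v 1) (v 2); rw [e1, e2, sm] at h; exact h
    have E4 : c 0 * c 3 * det2 (v 0) (v 1) = g.det * det2 (v 0) (v 3) := by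
      have h := L (v 0) (v 3); rw [e0, e3, sm] at h; exact h
    have P1 : (c 0 * c 2 * (c 1 * c 3)) * (det2 (v 0) (v 3) * det2 (v 2) (v 1))
        = (g.det * g.det) * (det2 (v 0) (v 2) * det2 (v 1) (v 3)) := by
      linear_combination (c 1 * c 3 * det2 (v 2) (v 1)) * E1 + (g.det * det2 (v 0) (v 2)) * E2
    have P2 : (c 0 * c 2 * (c 1 * c 3)) * (det2 (v 2) (v 3) * det2 (v 0) (v 1))
        = (g.det * g.det) * (det2 (v 1) (v 2) * det2 (v 0) (v 3)) := by
      linear_combination (c 0 * c 3 * det2 (v 0) (v 1)) * E3 + (g.det * det2 (v 1) (v 2)) * E4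
    have hXY : (c 0 * c 2 * (c 1 * c 3)) * (g.det * g.det) ≠ 0 := by
      exact mul_ne_zero (mul_ne_zero (mul_ne_zero (hc 0) (hc 2)) (mul_ne_zero (hc 1) (hc 3)))
        (mul_ne_zero hg hg)
    have P3 : (c 0 * c 2 * (c 1 * c 3)) * (g.det * g.det) *
        ((det2 (v 0) (v 3) * det2 (v 2) (v 1)) * (det2 (v 1) (v 2) * det2 (v 0) (v 3)))
        = (c 0 * c 2 * (c 1 * c 3)) * (g.det * g.det) *
        ((det2 (v 2) (v 3) * det2 (v 0) (v 1)) * (det2 (v 0) (v 2) * det2 (v 1) (v 3))) := by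
      linear_combination ((g.det * g.det) * (det2 (v 1) (v 2) * det2 (v 0) (v 3))) * P1
        - ((g.det * g.det) * (det2 (v 0) (v 2) * det2 (v 1) (v 3))) * P2
    have key := mul_left_cancel₀ hXY P3
    have main : (det2 (v 0) (v 2) * det2 (v 1) (v 3))^2
        - (det2 (v 0) (v 2) * det2 (v 1) (v 3)) * (det2 (v 1) (v 2) * det2 (v 0) (v 3))
        + (det2 (v 1) (v 2) * det2 (v 0) (v 3))^2 = 0 := by
      simp only [det2] at key ⊢
      linear_combination -key
    rw [cr_expand v hB, main, zero_div]
  · intro hcr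
    have main : (det2 (v 0) (v 2) * det2 (v 1) (v 3))^2
        - (det2 (v 0) (v 2) * det2 (v 1) (v 3)) * (det2 (v 1) (v 2) * det2 (v 0) (v 3))
        + (det2 (v 1) (v 2) * det2 (v 0) (v 3))^2 = 0 := by
      rw [cr_expand v hB] at hcr
      exact (div_eq_zero_iff.mp hcr).resolve_right (pow_ne_zero 2 hB)
    have R : (v 0 0 * v 2 1 - v 0 1 * v 2 0) ^ 2 * (v 3 0 * v 1 1 - v 3 1 * v 1 0) ^ 2 -
          (v 2 0 * v 1 1 - v 2 1 * v 1 0) * (v 0 0 * v 2 1 - v 0 1 * v 2 0) *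
            (v 3 0 * v 1 1 - v 3 1 * v 1 0) * (v 0 0 * v 3 1 - v 0 1 * v 3 0) +
        (v 2 0 * v 1 1 - v 2 1 * v 1 0) ^ 2 * (v 0 0 * v 3 1 - v 0 1 * v 3 0) ^ 2 = 0 := by
      simp only [det2] at main
      linear_combination main
    have hα : det2 (v 2) (v 1) ≠ 0 := hv 2 1 (by decide)
    have hβ : det2 (v 0) (v 2) ≠ 0 := hv 0 2 (by decide)
    have hγ : det2 (v 3) (v 1) ≠ 0 := hv 3 1 (by decide)
    have hδ : det2 (v 0) (v 3) ≠ 0 := hv 0 3 (by decide)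
    have hD : det2 (v 0) (v 1) ≠ 0 := hv 0 1 (by decide)
    refine ⟨Matrix.of fun i j =>
        det2 (v 0) (v 3) * det2 (v 2) (v 1) * v 0 i * (![-(v 1 1), v 1 0] j)
          + det2 (v 0) (v 1) * det2 (v 3) (v 1) * v 2 i * (![-(v 0 1), v 0 0] j),
      ?_,
      ![-(det2 (v 0) (v 3) * det2 (v 2) (v 1) * det2 (v 0) (v 1)),
        det2 (v 0) (v 1) ^ 2 * det2 (v 3) (v 1),
        det2 (v 0) (v 1) * det2 (v 3) (v 1) * det2 (v 0) (v 2) ^ 2 / det2 (v 0) (v 3),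
        det2 (v 3) (v 1) * det2 (v 0) (v 3) * det2 (v 0) (v 2)], ?_, ?_, ?_, ?_, ?_⟩
    · have hdet : (Matrix.of fun i j =>
          det2 (v 0) (v 3) * det2 (v 2) (v 1) * v 0 i * (![-(v 1 1), v 1 0] j)
            + det2 (v 0) (v 1) * det2 (v 3) (v 1) * v 2 i * (![-(v 0 1), v 0 0] j)
          : Matrix (Fin 2) (Fin 2) F).det =
          -(det2 (v 2) (v 1) * det2 (v 0) (v 2) * det2 (v 3) (v 1) * det2 (v 0) (v 3)
            * det2 (v 0) (v 1) ^ 2) := by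
        simp only [Matrix.det_fin_two, Matrix.of_apply, Matrix.cons_val_zero, Matrix.cons_val_one,
          Matrix.head_cons, Fin.mk_zero, Fin.mk_one, det2]
        ring
      rw [hdet]
      simp only [neg_ne_zero]
      exact mul_ne_zero (mul_ne_zero (mul_ne_zero (mul_ne_zero hα hβ) hγ) hδ) (pow_ne_zero 2 hD)
    · intro i
      fin_cases i
      · simpa using mul_ne_zero (mul_ne_zero hδ hα) hD
      · simpa using mul_ne_zero (pow_ne_zero 2 hD) hγ
      · show det2 (v 0) (v 1) * det2 (v 3) (v 1) * det2 (v 0) (v 2) ^ 2 / det2 (v 0) (v 3) ≠ 0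
        exact div_ne_zero (mul_ne_zero (mul_ne_zero hD hγ) (pow_ne_zero 2 hβ)) hδ
      · show det2 (v 3) (v 1) * det2 (v 0) (v 3) * det2 (v 0) (v 2) ≠ 0
        exact mul_ne_zero (mul_ne_zero hγ hδ) hβ
    · funext i
      show _ = -(det2 (v 0) (v 3) * det2 (v 2) (v 1) * det2 (v 0) (v 1)) * v 0 i
      fin_cases i <;>
      · simp only [Matrix.mulVec, dotProduct, Fin.sum_univ_two, Matrix.of_apply,
          Matrix.cons_val_zero, Matrix.cons_val_one, Matrix.head_cons, Fin.mk_zero, Fin.mk_one, det2]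
        ring
    · funext i
      show _ = det2 (v 0) (v 1) ^ 2 * det2 (v 3) (v 1) * v 2 i
      fin_cases i <;>
      · simp only [Matrix.mulVec, dotProduct, Fin.sum_univ_two, Matrix.of_apply,
          Matrix.cons_val_zero, Matrix.cons_val_one, Matrix.head_cons, Fin.mk_zero, Fin.mk_one, det2]
        ring
    · funext i
      show _ = det2 (v 0) (v 1) * det2 (v 3) (v 1) * det2 (v 0) (v 2) ^ 2 / det2 (v 0) (v 3) * v 3 i
      rw [div_mul_eq_mul_div, eq_div_iff hδ]
      fin_cases i
      · simp only [Matrix.mulVec, dotProduct, Fin.sum_univ_two, Matrix.of_apply,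
          Matrix.cons_val_zero, Matrix.cons_val_one, Matrix.head_cons, Fin.mk_zero, Fin.mk_one, det2]
        linear_combination (-(v 0 0)) * R
      · simp only [Matrix.mulVec, dotProduct, Fin.sum_univ_two, Matrix.of_apply,
          Matrix.cons_val_zero, Matrix.cons_val_one, Matrix.head_cons, Fin.mk_zero, Fin.mk_one, det2]
        linear_combination (-(v 0 1)) * R
    · funext i
      show _ = det2 (v 3) (v 1) * det2 (v 0) (v 3) * det2 (v 0) (v 2) * v 1 i
      fin_cases i <;>
      · simp only [Matrix.mulVec, dotProduct, Fin.sum_univ_two, Matrix.of_apply,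
          Matrix.cons_val_zero, Matrix.cons_val_one, Matrix.head_cons, Fin.mk_zero, Fin.mk_one, det2]
        ring
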